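/- arXiv:0903.1989 — 4 statements merged into one kernel-verified Lean document; each statement's English description precedes it below -/
import Mathlib

section
/- Let X be a finite-dimensional simplicial complex with a simplicial action of a group G, and let Y ≤ X be a connected, simply connected subcomplex that is a strict fundamental domain (Y meets every G-orbit of simplices in exactly one simplex). Let G_0 = ⟨G_s : s ∈ Y⟩ be the subgroup generated by the stabilizers of simplices of Y. Then π_0(|X|) ≅ G/G_0 (as G-sets, where G/G_0 is the coset space). -/
/-!
STATEMENT 4: Let `X` be a finite-dimensional simplicial complex with a simplicial
action of a group `G`, and `Y ≤ X` a connected, simply connected subcomplex which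
is a strict fundamental domain.  With `G₀ = ⟨G_s : s ∈ Y⟩` the subgroup generated
by the stabilizers of simplices of `Y`, there is a `G`-equivariant bijection
`π₀(|X|) ≅ G/G₀`.

Simplicial complexes are modelled as down-closed sets of nonempty finite sets of
vertices, and the geometric realization `|X|` concretely as the space of convex
weight functions supported on a simplex.
-/

open scoped Pointwise

/-- The geometric realization of the simplicial complex `X`. -/
abbrev Realization {V : Type*} (X : Set (Finset V)) : Type _ :=
  {f : V → ℝ // (∀ v, 0 ≤ f v) ∧ ∃ s ∈ X, Function.support f ⊆ ↑s ∧ ∑ v ∈ s, f v = 1}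

/-- `Y` is a subcomplex of `X`. -/
def IsSubcomplexOf {V : Type*} (Y X : Set (Finset V)) : Prop :=
  Y ⊆ X ∧ ∀ s ∈ Y, ∀ t : Finset V, t.Nonempty → t ⊆ s → t ∈ Y

/-- The subgroup generated by the (setwise) stabilizers of the simplices of `Y`. -/
def stabSubgroup {V G : Type*} [Group G] [DecidableEq V] [MulAction G V]
    (Y : Set (Finset V)) : Subgroup G :=
  Subgroup.closure {g : G | ∃ s ∈ Y, g • s = s}

/-!
`G` permutes the components of `|X|`, and the claim is the orbit–stabilizer bijection for the
component `c₀ ⊇ |Y|`. The action is transitive because every simplex of `X` has a translate in `Y`.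
A stabilizer `G_s`, `s ∈ Y`, maps a point of `|s| ⊆ |Y|` into `|s|`, so `G₀` fixes `c₀`.
Conversely, a simplex of `X` through a vertex of `G₀ • Y` is moved into `Y` by an element of `G₀`,
so the points of `|X|` with weight on such a vertex form a clopen set containing `c₀`. Anything
fixing `c₀` thus carries a vertex of `Y` to one of `G₀ • Y`, and strictness of the fundamental
domain puts it in `G₀`.
-/

instance {G α : Type*} [Group G] [TopologicalSpace α] [MulAction G α] [ContinuousConstSMul G α] :
    MulAction G (ConnectedComponents α) where
  smul g := (continuous_const_smul g).connectedComponentsMap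
  one_smul := ConnectedComponents.surjective_coe.forall.2 fun x => by
    change Continuous.connectedComponentsMap _ _ = _
    rw [Continuous.connectedComponentsMap_mk, one_smul]
  mul_smul g h := ConnectedComponents.surjective_coe.forall.2 fun x => by
    change Continuous.connectedComponentsMap _ _ =
      Continuous.connectedComponentsMap _ (Continuous.connectedComponentsMap _ _)
    simp only [Continuous.connectedComponentsMap_mk, mul_smul]

theorem ConnectedComponents.smul_mk {G α : Type*} [Group G] [TopologicalSpace α] [MulAction G α]
    [ContinuousConstSMul G α] (g : G) (x : α) :
    g • ConnectedComponents.mk x = ConnectedComponents.mk (g • x) :=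
  Continuous.connectedComponentsMap_mk _ x

theorem MulAction.exists_equiv_quotient_of_stabilizer_eq {G β : Type*} [Group G] [MulAction G β]
    {H : Subgroup G} {b : β} (hb : stabilizer G b = H) (htrans : ∀ c, ∃ g : G, g • b = c) :
    ∃ e : G ⧸ H ≃ β, ∀ (g : G) (y : G ⧸ H), e (g • y) = g • e y := by
  subst hb
  refine ⟨Equiv.ofBijective (ofQuotientStabilizer G b) ⟨injective_ofQuotientStabilizer G b,
    fun c => ?_⟩, ofQuotientStabilizer_smul G b⟩
  obtain ⟨g, rfl⟩ := htrans c
  exact ⟨g, rfl⟩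

section Simplex

variable {V : Type*}

/-- Weights summing to one on `s` and vanishing off `s`; not required to be nonnegative. -/
def MemSimplex (f : V → ℝ) (s : Finset V) : Prop :=
  Function.support f ⊆ s ∧ ∑ v ∈ s, f v = 1

theorem MemSimplex.exists_ne_zero {f : V → ℝ} {s : Finset V} (hf : MemSimplex f s) :
    ∃ v ∈ s, f v ≠ 0 :=
  Finset.exists_ne_zero_of_sum_ne_zero (hf.2 ▸ one_ne_zero)

theorem memSimplex_single [DecidableEq V] {v : V} {s : Finset V} (hv : v ∈ s) :
    MemSimplex (Pi.single v 1) s :=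
  ⟨Pi.support_single_subset.trans (Set.singleton_subset_iff.2 hv), by simp [hv]⟩

theorem MemSimplex.comp_inv_smul [DecidableEq V] {G : Type*} [Group G] [MulAction G V]
    {f : V → ℝ} {s : Finset V} (hf : MemSimplex f s) (g : G) :
    MemSimplex (fun v => f (g⁻¹ • v)) (g • s) := by
  refine ⟨fun v hv => Finset.inv_smul_mem_iff.1 (hf.1 hv), ?_⟩
  rw [Finset.smul_finset_def, Finset.sum_image (fun _ _ _ _ => (MulAction.injective g ·))]
  simpa using hf.2

end Simplex

namespace Realization

variable {V : Type*} {X Y : Set (Finset V)}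

def inclusion (h : Y ⊆ X) (f : Realization Y) : Realization X :=
  ⟨f.1, f.2.1, f.2.2.imp fun _ hs => ⟨h hs.1, hs.2⟩⟩

theorem continuous_inclusion (h : Y ⊆ X) : Continuous (inclusion h) :=
  continuous_subtype_val.subtype_mk _

theorem mk_eq_mk_of_memSimplex [PreconnectedSpace (Realization Y)] (h : Y ⊆ X)
    {f f' : Realization X} {s s' : Finset V} (hs : s ∈ Y) (hs' : s' ∈ Y)
    (hf : MemSimplex f.1 s) (hf' : MemSimplex f'.1 s') :
    ConnectedComponents.mk f = ConnectedComponents.mk f' :=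
  ConnectedComponents.coe_eq_coe'.2 <|
    (isPreconnected_range (continuous_inclusion h)).subset_connectedComponent
      ⟨⟨f'.1, f'.2.1, s', hs', hf'⟩, rfl⟩ ⟨⟨f.1, f.2.1, s, hs, hf⟩, rfl⟩

theorem isOpen_setOf_exists_ne_zero (W : Set V) :
    IsOpen {f : Realization X | ∃ v ∈ W, f.1 v ≠ 0} := by
  rw [show {f : Realization X | ∃ v ∈ W, f.1 v ≠ 0} = ⋃ v ∈ W, {f | f.1 v ≠ 0} by ext; simp]
  exact isOpen_biUnion fun v _ =>
    isOpen_ne_fun ((continuous_apply v).comp continuous_subtype_val) continuous_const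

theorem isClopen_setOf_exists_ne_zero {W : Set V}
    (hW : ∀ s ∈ X, ∀ v ∈ s, ∀ w ∈ s, v ∈ W → w ∈ W) :
    IsClopen {f : Realization X | ∃ v ∈ W, f.1 v ≠ 0} := by
  refine ⟨?_, isOpen_setOf_exists_ne_zero W⟩
  have hcompl : {f : Realization X | ∃ v ∈ W, f.1 v ≠ 0}ᶜ = {f | ∃ v ∈ Wᶜ, f.1 v ≠ 0} := by
    ext ⟨f, -, s, hs, hfs⟩
    simp only [Set.mem_compl_iff, Set.mem_ofPred_eq]
    constructor
    · intro hf
      obtain ⟨v, -, hv⟩ := MemSimplex.exists_ne_zero hfs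
      exact ⟨v, fun hvW => hf ⟨v, hvW, hv⟩, hv⟩
    · rintro ⟨w, hw, hw0⟩ ⟨v, hv, hv0⟩
      exact hw (hW s hs v (hfs.1 hv0) w (hfs.1 hw0) hv)
  rw [← isOpen_compl_iff, hcompl]
  exact isOpen_setOf_exists_ne_zero _

end Realization

theorem IsSubcomplexOf.singleton_mem {V : Type*} {X Y : Set (Finset V)} (hY : IsSubcomplexOf Y X)
    {s : Finset V} {v : V} (hs : s ∈ Y) (hv : v ∈ s) : {v} ∈ Y :=
  hY.2 s hs _ (Finset.singleton_nonempty v) (Finset.singleton_subset_iff.2 hv)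

section StrictFundamentalDomain

variable {V : Type*} (G : Type*) [Group G] [DecidableEq V] [MulAction G V]

def IsStrictFundamentalDomain (X Y : Set (Finset V)) : Prop :=
  ∀ s ∈ X, ∃! t : Finset V, t ∈ Y ∧ ∃ g : G, g • s = t

def stabSubgroupSmulVertices (Y : Set (Finset V)) : Set V :=
  (stabSubgroup (G := G) Y : Set G) • {v | ({v} : Finset V) ∈ Y}

variable {G} {X Y : Set (Finset V)}

theorem mem_stabSubgroup_of_smul_mem (hfund : IsStrictFundamentalDomain G X Y) (hYX : Y ⊆ X)
    {g : G} {t : Finset V} (ht : t ∈ Y) (hgt : g • t ∈ Y) : g ∈ stabSubgroup (G := G) Y := by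
  obtain ⟨u, -, hu⟩ := hfund t (hYX ht)
  have hgtt : g • t = t := (hu _ ⟨hgt, g, rfl⟩).trans (hu t ⟨ht, 1, one_smul G t⟩).symm
  exact Subgroup.subset_closure ⟨t, ht, hgtt⟩

theorem mem_stabSubgroup_of_smul_mem_stabSubgroupSmulVertices
    (hfund : IsStrictFundamentalDomain G X Y) (hYX : Y ⊆ X) {h : G} {u : V} (hu : {u} ∈ Y)
    (hhu : h • u ∈ stabSubgroupSmulVertices G Y) : h ∈ stabSubgroup (G := G) Y := by
  obtain ⟨k, hk, u', hu', hku'⟩ := hhu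
  have hkh : (k⁻¹ * h) • ({u} : Finset V) ∈ Y := by
    rwa [Finset.smul_finset_singleton, mul_smul, ← hku', inv_smul_smul]
  simpa using mul_mem hk (mem_stabSubgroup_of_smul_mem hfund hYX hu hkh)

theorem mem_stabSubgroupSmulVertices_of_mem_simplex (hfund : IsStrictFundamentalDomain G X Y)
    (hY : IsSubcomplexOf Y X) {s : Finset V} (hs : s ∈ X) {v w : V} (hv : v ∈ s) (hw : w ∈ s)
    (hvW : v ∈ stabSubgroupSmulVertices G Y) :
    w ∈ stabSubgroupSmulVertices G Y := by
  obtain ⟨t, ⟨ht, g, rfl⟩, -⟩ := hfund s hs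
  have hvert : ∀ x ∈ s, ({g • x} : Finset V) ∈ Y := fun x hx =>
    hY.singleton_mem ht (Finset.smul_mem_smul_finset hx)
  have hg : g⁻¹ ∈ stabSubgroup (G := G) Y :=
    mem_stabSubgroup_of_smul_mem_stabSubgroupSmulVertices hfund hY.1 (hvert v hv)
      (by rwa [inv_smul_smul])
  exact ⟨g⁻¹, hg, g • w, hvert w hw, inv_smul_smul g w⟩

end StrictFundamentalDomain

namespace Realization

open ConnectedComponents

variable {V G : Type*} [Group G] [DecidableEq V] [MulAction G V] {X Y : Set (Finset V)}
  [MulAction G (Realization X)]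

theorem memSimplex_smul
    (hφ : ∀ (g : G) (f : Realization X) (v : V), (g • f).1 v = f.1 (g⁻¹ • v))
    {f : Realization X} {s : Finset V} (hf : MemSimplex f.1 s) (g : G) :
    MemSimplex (g • f).1 (g • s) := by
  rw [show (g • f).1 = _ from funext (hφ g f)]
  exact hf.comp_inv_smul g

variable [ContinuousConstSMul G (Realization X)] {x₀ : Realization X} {s₀ : Finset V}

theorem exists_smul_mk_eq [PreconnectedSpace (Realization Y)] (hY : Y ⊆ X)
    (hfund : IsStrictFundamentalDomain G X Y)
    (hφ : ∀ (g : G) (f : Realization X) (v : V), (g • f).1 v = f.1 (g⁻¹ • v))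
    (hs₀ : s₀ ∈ Y) (hx₀ : MemSimplex x₀.1 s₀) (c : ConnectedComponents (Realization X)) :
    ∃ g : G, g • mk x₀ = c := by
  obtain ⟨f, rfl⟩ := surjective_coe c
  obtain ⟨s, hs, hfs⟩ := f.2.2
  obtain ⟨t, ⟨ht, g, rfl⟩, -⟩ := hfund s hs
  refine ⟨g⁻¹, ?_⟩
  rw [mk_eq_mk_of_memSimplex hY hs₀ ht hx₀ (memSimplex_smul hφ hfs g), smul_mk,
    inv_smul_smul]

theorem stabSubgroup_le_stabilizer [PreconnectedSpace (Realization Y)]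
    (hX : ∀ s ∈ X, s.Nonempty) (hY : IsSubcomplexOf Y X)
    (hφ : ∀ (g : G) (f : Realization X) (v : V), (g • f).1 v = f.1 (g⁻¹ • v))
    (hs₀ : s₀ ∈ Y) (hx₀ : MemSimplex x₀.1 s₀) :
    stabSubgroup (G := G) Y ≤ MulAction.stabilizer G (mk x₀) := by
  refine (Subgroup.closure_le _).2 ?_
  rintro h ⟨s, hs, hhs⟩
  obtain ⟨v, hv⟩ := hX s (hY.1 hs)
  let p : Realization X := ⟨Pi.single v 1, fun w => by by_cases hw : w = v <;> simp [hw],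
    s, hY.1 hs, memSimplex_single hv⟩
  have hp : MemSimplex p.1 s := memSimplex_single hv
  have hhp : MemSimplex (h • p).1 s := hhs ▸ memSimplex_smul hφ hp h
  change h • mk x₀ = mk x₀
  rw [mk_eq_mk_of_memSimplex hY.1 hs₀ hs hx₀ hp, smul_mk]
  exact mk_eq_mk_of_memSimplex hY.1 hs hs hhp hp

theorem stabilizer_le_stabSubgroup (hY : IsSubcomplexOf Y X)
    (hfund : IsStrictFundamentalDomain G X Y)
    (hφ : ∀ (g : G) (f : Realization X) (v : V), (g • f).1 v = f.1 (g⁻¹ • v))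
    (hs₀ : s₀ ∈ Y) (hx₀ : MemSimplex x₀.1 s₀) :
    MulAction.stabilizer G (mk x₀) ≤ stabSubgroup (G := G) Y := by
  intro h hh
  have hA := isClopen_setOf_exists_ne_zero (X := X) fun s hs v hv w hw =>
    mem_stabSubgroupSmulVertices_of_mem_simplex hfund hY hs hv hw
  obtain ⟨v₀, hv₀, hx₀v₀⟩ := hx₀.exists_ne_zero
  have hx₀A : ∃ v ∈ stabSubgroupSmulVertices G Y, x₀.1 v ≠ 0 :=
    ⟨v₀, ⟨1, one_mem _, v₀, hY.singleton_mem hs₀ hv₀, one_smul G v₀⟩, hx₀v₀⟩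
  obtain ⟨v, hvW, hv⟩ := hA.connectedComponent_subset hx₀A
    (coe_eq_coe'.1 ((smul_mk h x₀).symm.trans hh))
  rw [hφ] at hv
  exact mem_stabSubgroup_of_smul_mem_stabSubgroupSmulVertices hfund hY.1
    (hY.singleton_mem hs₀ (hx₀.1 hv)) (by rwa [smul_inv_smul])

end Realization

theorem pi0_of_strict_fundamental_domain_general {V G : Type*} [Group G] [DecidableEq V]
    [MulAction G V] (X Y : Set (Finset V))
    -- `X` is a simplicial complex:
    (hX : ∀ s ∈ X, s.Nonempty ∧ ∀ t : Finset V, t.Nonempty → t ⊆ s → t ∈ X)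
    -- `Y` is a subcomplex of `X`:
    (hY : IsSubcomplexOf Y X)
    -- which is a strict fundamental domain (each `G`-orbit meets `Y` exactly once):
    (hfund : ∀ s ∈ X, ∃! t : Finset V, t ∈ Y ∧ ∃ g : G, g • s = t)
    -- `|Y|` is connected and simply connected:
    (hYconn : ConnectedSpace (Realization Y))
    -- the induced action of `G` on the realization `|X|`:
    (φ : G →* Equiv.Perm (Realization X))
    (hφcont : ∀ g : G, Continuous (φ g))
    (hφ : ∀ (g : G) (f : Realization X) (v : V), (φ g f).1 v = f.1 (g⁻¹ • v)) :
    -- conclusion: `π₀(|X|) ≅ G/G₀` as `G`-sets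
    ∃ e : G ⧸ stabSubgroup (G := G) Y ≃ ConnectedComponents (Realization X),
      ∀ (g : G) (y : G ⧸ stabSubgroup (G := G) Y) (f : Realization X),
        e y = ConnectedComponents.mk f → e (g • y) = ConnectedComponents.mk (φ g f) := by
  let _ : MulAction G (Realization X) := MulAction.compHom _ φ
  have _ : ContinuousConstSMul G (Realization X) := ⟨hφcont⟩
  obtain ⟨⟨x₀, hx₀, s₀, hs₀, hx₀s₀⟩⟩ := hYconn.toNonempty
  let p : Realization X := ⟨x₀, hx₀, s₀, hY.1 hs₀, hx₀s₀⟩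
  have hstab : MulAction.stabilizer G (ConnectedComponents.mk p) = stabSubgroup Y :=
    le_antisymm (Realization.stabilizer_le_stabSubgroup hY hfund hφ hs₀ hx₀s₀)
      (Realization.stabSubgroup_le_stabilizer (fun s hs => (hX s hs).1) hY hφ hs₀ hx₀s₀)
  obtain ⟨e, he⟩ := MulAction.exists_equiv_quotient_of_stabilizer_eq hstab
    (Realization.exists_smul_mk_eq hY.1 hfund hφ hs₀ hx₀s₀)
  exact ⟨e, fun g y f hy => by rw [he, hy, ConnectedComponents.smul_mk]; rfl⟩

theorem pi0_of_strict_fundamental_domain {V G : Type*} [Group G] [DecidableEq V]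
    [MulAction G V] (X Y : Set (Finset V))
    -- `X` is a simplicial complex:
    (hX : ∀ s ∈ X, s.Nonempty ∧ ∀ t : Finset V, t.Nonempty → t ⊆ s → t ∈ X)
    -- which is finite-dimensional:
    (hfindim : ∃ n, ∀ s ∈ X, s.card ≤ n)
    -- `G` acts simplicially on `X`:
    (hGX : ∀ g : G, ∀ s ∈ X, g • s ∈ X)
    -- `Y` is a subcomplex of `X`:
    (hY : IsSubcomplexOf Y X)
    -- which is a strict fundamental domain (each `G`-orbit meets `Y` exactly once):
    (hfund : ∀ s ∈ X, ∃! t : Finset V, t ∈ Y ∧ ∃ g : G, g • s = t)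
    -- `|Y|` is connected and simply connected:
    (hYconn : ConnectedSpace (Realization Y))
    (hYsc : SimplyConnectedSpace (Realization Y))
    -- the induced action of `G` on the realization `|X|`:
    (φ : G →* Equiv.Perm (Realization X))
    (hφcont : ∀ g : G, Continuous (φ g))
    (hφ : ∀ (g : G) (f : Realization X) (v : V), (φ g f).1 v = f.1 (g⁻¹ • v)) :
    -- conclusion: `π₀(|X|) ≅ G/G₀` as `G`-sets
    ∃ e : G ⧸ stabSubgroup (G := G) Y ≃ ConnectedComponents (Realization X),
      ∀ (g : G) (y : G ⧸ stabSubgroup (G := G) Y) (f : Realization X),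
        e y = ConnectedComponents.mk f → e (g • y) = ConnectedComponents.mk (φ g f) :=
  pi0_of_strict_fundamental_domain_general X Y hX hY hfund hYconn φ hφcont hφ
end

section
/- Let (A_i)_{i ∈ I} be a directed family of subgroups of a group H indexed by a poset I with inclusions as transition maps, and let L = colim_I A_i be the colimit with canonical maps φ_i : A_i → L and canonical homomorphism φ : L → H restricting to the inclusions. Suppose that for any i, j ∈ I and any elements a ∈ A_i, b ∈ A_j such that φ(φ_i(a)) and φ(φ_j(b)) lie in a common subgroup of the family (i.e. there is k with a, b ∈ A_k after transporting along φ), the product φ_i(a)φ_j(b) equals φ_k(ab) in L. If every element of L can be written as a finite product of images φ_i(a_i), and whenever a word φ_{i_1}(a_1)···φ_{i_n}(a_n) maps to 1 in H with n > 1 there exist consecutive letters lying in a common group A_k of the family, then φ : L → H is injective onto the subgroup ⟨A_i : i ∈ I⟩. -/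
/-!
Write `x ∈ L` as a word `φ_{i₁}(a₁) ⋯ φ_{iₙ}(aₙ)`, possible because the `φ_i(A_i)` generate `L`.
If `φ x = 1`, the letters multiply to `1` in `H`, so either the word has at most one letter, which is
then trivial, or two adjacent letters lie in a common `A_k` and can be merged into a single letter of
`A_k` without changing the value of the word in `L` or in `H`. Induction on the length gives `x = 1`.
The image of `φ` is generated by the images of the `φ_i`, which are the `A_i`.
-/

section WordProd

variable {ι : Type*} {G : ι → Type*} {M : Type*} [∀ i, MulOneClass (G i)] [Monoid M]

def wordProd (f : ∀ i, G i →* M) (w : List (Σ i, G i)) : M :=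
  (w.map fun p => f p.1 p.2).prod

variable (f : ∀ i, G i →* M)

@[simp]
theorem wordProd_nil : wordProd f [] = 1 := rfl

@[simp]
theorem wordProd_cons (p : Σ i, G i) (w : List (Σ i, G i)) :
    wordProd f (p :: w) = f p.1 p.2 * wordProd f w := List.prod_cons

@[simp]
theorem wordProd_append (u v : List (Σ i, G i)) :
    wordProd f (u ++ v) = wordProd f u * wordProd f v := by
  simp only [wordProd, List.map_append, List.prod_append]

theorem map_wordProd {N : Type*} [Monoid N] (g : M →* N) (w : List (Σ i, G i)) :
    g (wordProd f w) = wordProd (fun i => g.comp (f i)) w := by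
  simp only [wordProd, map_list_prod, List.map_map]
  rfl

theorem wordProd_append_cons_of_mul_eq (u v : List (Σ i, G i)) {p q r : Σ i, G i}
    (h : f p.1 p.2 * f q.1 q.2 = f r.1 r.2) :
    wordProd f (u ++ r :: v) = wordProd f (u ++ p :: q :: v) := by
  simp only [wordProd_append, wordProd_cons, ← h, mul_assoc]

theorem exists_wordProd_eq {G : ι → Type*} [∀ i, Group (G i)] {M : Type*} [Group M]
    (f : ∀ i, G i →* M) (hf : ⨆ i, (f i).range = ⊤) (x : M) : ∃ w, wordProd f w = x := by
  refine Subgroup.iSup_induction (C := fun x => ∃ w, wordProd f w = x) _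
    (hf ▸ Subgroup.mem_top x) ?_ ⟨[], rfl⟩ ?_
  · rintro i _ ⟨a, rfl⟩
    exact ⟨[⟨i, a⟩], mul_one _⟩
  · rintro _ _ ⟨u, rfl⟩ ⟨v, rfl⟩
    exact ⟨u ++ v, wordProd_append f u v⟩

end WordProd

theorem List.eq_take_append_getElem_cons_getElem_cons_drop {α : Type*} (w : List α) (t : ℕ)
    (ht : t + 1 < w.length) :
    w = w.take t ++ w[t] :: w[t + 1] :: w.drop (t + 2) := by
  conv_lhs => rw [← w.take_append_drop t, List.drop_eq_getElem_cons (by omega),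
    List.drop_eq_getElem_cons ht]

section Shortening

variable {H : Type*} [Group H] {I : Type*} {A : I → Subgroup H}

def AdjacentLettersShareSubgroup (A : I → Subgroup H) (w : List (Σ i, A i)) : Prop :=
  ∃ (u v : List (Σ i, A i)) (p q : Σ i, A i) (k : I),
    w = u ++ p :: q :: v ∧ (p.2 : H) ∈ A k ∧ (q.2 : H) ∈ A k

theorem adjacentLettersShareSubgroup_of_word_shortening
    (hshort : ∀ (n : ℕ) (idx : Fin (n + 2) → I) (a : ∀ t, A (idx t)),
      (List.ofFn fun t => ((a t : H))).prod = 1 →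
      ∃ (t : Fin (n + 1)) (k : I),
        ((a t.castSucc : H) ∈ A k) ∧ ((a t.succ : H) ∈ A k))
    {w : List (Σ i, A i)} (hw : 2 ≤ w.length) (h1 : wordProd (fun i => (A i).subtype) w = 1) :
    AdjacentLettersShareSubgroup A w := by
  obtain ⟨p, q, v, rfl⟩ : ∃ p q v, w = p :: q :: v := by
    match w, hw with
    | p :: q :: v, _ => exact ⟨p, q, v, rfl⟩
  obtain ⟨t, k, hp, hq⟩ := hshort v.length (fun t => (p :: q :: v)[(t : ℕ)].1)
    (fun t => (p :: q :: v)[(t : ℕ)].2)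
    ((congrArg List.prod (List.ofFn_getElem_eq_map (p :: q :: v) fun p => (p.2 : H))).trans h1)
  exact ⟨_, _, _, _, k, (p :: q :: v).eq_take_append_getElem_cons_getElem_cons_drop t
    (by simpa [Nat.lt_succ_iff] using t.isLt), hp, hq⟩

theorem wordProd_eq_one_of_shortening {L : Type*} [Monoid L] {φi : ∀ i, A i →* L}
    (hprod : ∀ (i j k : I) (a : A i) (b : A j) (ha : (a : H) ∈ A k)
      (hb : (b : H) ∈ A k), φi i a * φi j b = φi k ⟨(a : H) * b, mul_mem ha hb⟩)
    (hsplit : ∀ w : List (Σ i, A i), 2 ≤ w.length → wordProd (fun i => (A i).subtype) w = 1 →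
      AdjacentLettersShareSubgroup A w)
    (w : List (Σ i, A i)) (h1 : wordProd (fun i => (A i).subtype) w = 1) :
    wordProd φi w = 1 := by
  induction hn : w.length using Nat.strong_induction_on generalizing w with
  | _ n ih =>
  by_cases hw : 2 ≤ w.length
  · obtain ⟨u, v, p, q, k, rfl, hp, hq⟩ := hsplit w hw h1
    let r : Σ i, A i := ⟨k, ⟨p.2 * q.2, mul_mem hp hq⟩⟩
    have hL := wordProd_append_cons_of_mul_eq φi u v (r := r) (hprod _ _ _ _ _ hp hq)
    have hH := wordProd_append_cons_of_mul_eq (fun i => (A i).subtype) u v (r := r) rfl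
    rw [← hL]
    exact ih _ (by simp [← hn]) _ (hH.trans h1) rfl
  · match w, hw, h1 with
    | [], _, _ => rfl
    | [p], _, h1 =>
      have hp : p.2 = 1 := Subtype.ext (by simpa using h1)
      simp [hp]
    | _ :: _ :: _, hw, _ => exact absurd (by simp) hw

end Shortening

theorem colimit_injective_of_word_shortening_general {H : Type*} [Group H] {I : Type*}
    (A : I → Subgroup H)
    (L : Type*) [Group L] (φi : ∀ i, A i →* L) (φ : L →* H)
    -- `φ` restricts to the inclusions `A_i ↪ H`:
    (hφ : ∀ (i : I) (a : A i), φ (φi i a) = (a : H))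
    -- products of two letters lying in a common subgroup can be formed in `L`:
    (hprod : ∀ (i j k : I) (a : A i) (b : A j) (ha : (a : H) ∈ A k)
      (hb : (b : H) ∈ A k), φi i a * φi j b = φi k ⟨(a : H) * b, mul_mem ha hb⟩)
    -- every element of `L` is a finite product of images `φ_i(a)`:
    (hgenL : ⨆ i, (φi i).range = (⊤ : Subgroup L))
    -- any word of length `> 1` mapping to `1` in `H` has two consecutive letters
    -- lying in a common group of the family:
    (hshort : ∀ (n : ℕ) (idx : Fin (n + 2) → I) (a : ∀ t, A (idx t)),
      (List.ofFn fun t => ((a t : H))).prod = 1 →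
      ∃ (t : Fin (n + 1)) (k : I),
        ((a t.castSucc : H) ∈ A k) ∧ ((a t.succ : H) ∈ A k)) :
    Function.Injective φ ∧ MonoidHom.range φ = ⨆ i, A i := by
  have hφi : ∀ i, φ.comp (φi i) = (A i).subtype := fun i => MonoidHom.ext (hφ i)
  constructor
  · rw [injective_iff_map_eq_one]
    intro x hx
    obtain ⟨w, rfl⟩ := exists_wordProd_eq φi hgenL x
    rw [map_wordProd, funext hφi] at hx
    exact wordProd_eq_one_of_shortening hprod
      (fun _ => adjacentLettersShareSubgroup_of_word_shortening hshort) w hx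
  · rw [MonoidHom.range_eq_map, ← hgenL, Subgroup.map_iSup]
    simp only [MonoidHom.map_range, hφi, Subgroup.range_subtype]

theorem colimit_injective_of_word_shortening {H : Type*} [Group H] {I : Type*}
    [Preorder I] (A : I → Subgroup H)
    (hdir : ∀ i j : I, i ≤ j → A i ≤ A j)
    (L : Type*) [Group L] (φi : ∀ i, A i →* L) (φ : L →* H)
    -- the `φ_i` are compatible with the inclusions of the system:
    (hcompat : ∀ (i j : I) (h : i ≤ j) (a : A i), φi j ⟨a, hdir i j h a.2⟩ = φi i a)
    -- `φ` restricts to the inclusions `A_i ↪ H`: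
    (hφ : ∀ (i : I) (a : A i), φ (φi i a) = (a : H))
    -- products of two letters lying in a common subgroup can be formed in `L`:
    (hprod : ∀ (i j k : I) (a : A i) (b : A j) (ha : (a : H) ∈ A k)
      (hb : (b : H) ∈ A k), φi i a * φi j b = φi k ⟨(a : H) * b, mul_mem ha hb⟩)
    -- every element of `L` is a finite product of images `φ_i(a)`:
    (hgenL : ⨆ i, (φi i).range = (⊤ : Subgroup L))
    -- any word of length `> 1` mapping to `1` in `H` has two consecutive letters
    -- lying in a common group of the family:
    (hshort : ∀ (n : ℕ) (idx : Fin (n + 2) → I) (a : ∀ t, A (idx t)),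
      (List.ofFn fun t => ((a t : H))).prod = 1 →
      ∃ (t : Fin (n + 1)) (k : I),
        ((a t.castSucc : H) ∈ A k) ∧ ((a t.succ : H) ∈ A k)) :
    Function.Injective φ ∧ MonoidHom.range φ = ⨆ i, A i :=
  colimit_injective_of_word_shortening_general A L φi φ hφ hprod hgenL hshort
end

section
/- In a spherical Coxeter complex, a pair of roots (α, β) is prenilpotent if and only if α ≠ −β, and in that case [α,β] = {γ ∈ Φ : α ∩ β ⊆ γ}, i.e. the condition (−α)∩(−β) ⊆ −γ is automatic. -/
/-!
STATEMENT 14: In a spherical (finite) Coxeter complex, a pair of roots `(α,β)` is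
prenilpotent if and only if `α ≠ −β`, and in that case
`[α,β] = {γ ∈ Φ : α ∩ β ⊆ γ}`, i.e. the condition `(−α) ∩ (−β) ⊆ −γ` is
automatic.  Roots are modelled as half-spaces of reflections of `W` (or their
complements), with `−γ = γᶜ`.
-/

variable {B W : Type*} [Group W]

/-- The half-space of chambers on the positive side of the wall of a reflection `t`. -/
def halfSpace {M : CoxeterMatrix B} (cs : CoxeterSystem M W) (t : W) : Set W :=
  {w | cs.length w < cs.length (t * w)}

/-- `α` is a root: a half-space of some reflection or its complement. -/
def IsRoot {M : CoxeterMatrix B} (cs : CoxeterSystem M W) (α : Set W) : Prop :=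
  ∃ t : W, cs.IsReflection t ∧ (α = halfSpace cs t ∨ α = (halfSpace cs t)ᶜ)

/-- The root interval `[α,β] = {γ ∈ Φ : α ∩ β ⊆ γ ∧ (−α) ∩ (−β) ⊆ −γ}`. -/
def rootInterval {M : CoxeterMatrix B} (cs : CoxeterSystem M W) (α β : Set W) :
    Set (Set W) :=
  {γ | IsRoot cs γ ∧ α ∩ β ⊆ γ ∧ αᶜ ∩ βᶜ ⊆ γᶜ}

/-!
In a finite Coxeter group, right multiplication by `w₀⁻¹`, where `w₀` has maximal length, sends
every root to its complement. Hence every root contains exactly half of `W`, so two roots that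
are not opposite can neither be disjoint nor cover `W` (either would force `α = βᶜ`), and
pulling `α ∩ β ⊆ γ` back along this map gives `αᶜ ∩ βᶜ ⊆ γᶜ`.

That this map exchanges the two sides of every wall is the identity `N(w w₀⁻¹) = T \ N(w)` for
inversion sets, which rests on the reflection cocycle of the usual proof of the strong exchange
condition: `W` acts on `W × {±1}` by `sᵢ • (t, ε) = (sᵢ t sᵢ, ±ε)`, the sign flipping exactly
when `t = sᵢ`, and the sign `w` attaches to `t` is `-1` precisely when `t` is a right inversion
of `w`.
-/

theorem pow_mul_conj_eq_iff_of_mul_mul_eq {G : Type*} [Group G] {q a : G} (hq : q * a * q = a)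
    (x : G) (k : ℕ) : q ^ k * (q * x * q⁻¹) = a ↔ q ^ (k + 2) * x = a := by
  rw [show q ^ (k + 2) * x = q * (q ^ k * (q * x * q⁻¹)) * q by group]
  conv_rhs => rw [← hq]
  simp only [mul_left_cancel_iff, mul_right_cancel_iff]

theorem Set.inter_nonempty_of_two_mul_ncard_eq {X : Type*} [Finite X] {A B : Set X}
    (hA : 2 * A.ncard = Nat.card X) (hB : 2 * B.ncard = Nat.card X) (hne : A ≠ Bᶜ) :
    (A ∩ B).Nonempty := by
  by_contra h
  rw [Set.not_nonempty_iff_eq_empty, ← Set.disjoint_iff_inter_eq_empty,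
    ← Set.subset_compl_iff_disjoint_right] at h
  have := Set.ncard_add_ncard_compl B
  exact hne (Set.eq_of_subset_of_ncard_le h (by omega))

namespace CoxeterSystem

variable {M : CoxeterMatrix B} (cs : CoxeterSystem M W)

local prefix:100 "σ" => cs.simple
local prefix:100 "π" => cs.wordProd
local prefix:100 "ℓ" => cs.length
local prefix:100 "ris " => cs.rightInvSeq

theorem simple_mul_mul_simple_eq_simple_iff (i : B) (t : W) :
    σ i * t * σ i = σ i ↔ t = σ i := by
  constructor
  · intro h
    calc t = σ i * (σ i * t * σ i) * σ i := by simp [mul_assoc, simple_mul_simple_cancel_left]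
      _ = σ i := by rw [h, simple_mul_simple_self, one_mul]
  · rintro rfl
    rw [simple_mul_simple_self, one_mul]

open Classical in
noncomputable def simpleSignMap (i : B) (p : W × ℤˣ) : W × ℤˣ :=
  (σ i * p.1 * σ i, if p.1 = σ i then -p.2 else p.2)

theorem simpleSignMap_involutive (i : B) : Function.Involutive (cs.simpleSignMap i) := by
  rintro ⟨t, ε⟩
  dsimp only [simpleSignMap]
  rw [simple_mul_mul_simple_eq_simple_iff]
  by_cases ht : t = σ i <;> simp [ht, mul_assoc, simple_mul_simple_cancel_left]

noncomputable def simpleSignPerm (i : B) : Equiv.Perm (W × ℤˣ) :=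
  (cs.simpleSignMap_involutive i).toPerm

-- The sign picked up from the `k`-th letter of the word `(sᵢ sⱼ) ^ a` acting on `(t, ε)`.
open Classical in
noncomputable def dihedralSign (i j : B) (t : W) (k : ℕ) : ℤˣ :=
  if (σ i * σ j) ^ k * t = σ j then -1 else 1

theorem dihedralSign_conj (i j : B) (t : W) (k : ℕ) :
    cs.dihedralSign i j ((σ i * σ j) * t * (σ i * σ j)⁻¹) k = cs.dihedralSign i j t (k + 2) := by
  have hq : (σ i * σ j) * σ j * (σ i * σ j) = σ j := by
    simp [mul_assoc, simple_mul_simple_cancel_left]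
  classical
  exact if_congr (pow_mul_conj_eq_iff_of_mul_mul_eq hq t k) rfl rfl

theorem simpleSignPerm_mul_apply (i j : B) (t : W) (ε : ℤˣ) :
    (cs.simpleSignPerm i * cs.simpleSignPerm j) (t, ε) =
      ((σ i * σ j) * t * (σ i * σ j)⁻¹,
        cs.dihedralSign i j t 0 * cs.dihedralSign i j t 1 * ε) := by
  have hconj : σ i * (σ j * t * σ j) * σ i = (σ i * σ j) * t * (σ i * σ j)⁻¹ := by
    simp only [mul_inv_rev, inv_simple, mul_assoc]
  have hsign : σ j * t * σ j = σ i ↔ (σ i * σ j) ^ 1 * t = σ j := by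
    rw [pow_one]
    constructor <;> intro h
    · calc σ i * σ j * t = σ i * (σ j * t * σ j) * σ j := by simp [mul_assoc]
        _ = σ j := by rw [h, simple_mul_simple_self, one_mul]
    · calc σ j * t * σ j = σ i * (σ i * σ j * t) * σ j := by
            simp [mul_assoc, simple_mul_simple_cancel_left]
        _ = σ i := by rw [h, mul_assoc, simple_mul_simple_self, mul_one]
  classical
  simp only [Equiv.Perm.mul_apply, simpleSignPerm, Function.Involutive.coe_toPerm, simpleSignMap,
    dihedralSign, hconj, hsign, pow_zero, one_mul]
  split_ifs <;> simp

theorem simpleSignPerm_mul_pow_apply (i j : B) (a : ℕ) (t : W) (ε : ℤˣ) :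
    ((cs.simpleSignPerm i * cs.simpleSignPerm j) ^ a) (t, ε) =
      ((σ i * σ j) ^ a * t * ((σ i * σ j) ^ a)⁻¹,
        (∏ k ∈ Finset.range (2 * a), cs.dihedralSign i j t k) * ε) := by
  induction a generalizing t ε with
  | zero => simp
  | succ a ih =>
    rw [pow_succ, Equiv.Perm.mul_apply, simpleSignPerm_mul_apply, ih]
    simp only [dihedralSign_conj, Prod.mk.injEq]
    constructor
    · simp only [pow_succ, mul_inv_rev, mul_assoc]
    · rw [show 2 * (a + 1) = 2 * a + 1 + 1 by ring, Finset.prod_range_succ', Finset.prod_range_succ']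
      simp only [zero_add, add_assoc, Nat.reduceAdd]
      ac_rfl

theorem isLiftable_simpleSignPerm : M.IsLiftable cs.simpleSignPerm := by
  intro i j
  have hq : (σ i * σ j) ^ M i j = 1 := cs.simple_mul_simple_pow i j
  have hperiodic (t : W) (k : ℕ) : cs.dihedralSign i j t (M i j + k) = cs.dihedralSign i j t k := by
    rw [dihedralSign, pow_add, hq, one_mul, dihedralSign]
  ext ⟨t, ε⟩ : 1
  -- the `2 * M i j` signs are two copies of one period, so their product is a square
  rw [simpleSignPerm_mul_pow_apply, two_mul, Finset.prod_range_add]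
  simp [hperiodic, hq]

noncomputable def signRep : W →* Equiv.Perm (W × ℤˣ) :=
  cs.lift ⟨cs.simpleSignPerm, cs.isLiftable_simpleSignPerm⟩

theorem signRep_simple (i : B) : cs.signRep (σ i) = cs.simpleSignPerm i :=
  cs.lift_apply_simple cs.isLiftable_simpleSignPerm i

open Classical in
theorem signRep_wordProd (ω : List B) (t : W) (ε : ℤˣ) :
    cs.signRep (π ω) (t, ε) = (π ω * t * (π ω)⁻¹, (-1) ^ (ris ω).count t * ε) := by
  induction ω generalizing t ε with
  | nil => simp [signRep]
  | cons i ω ih =>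
    have hconj : π ω * t * (π ω)⁻¹ = σ i ↔ (π ω)⁻¹ * σ i * π ω = t := by
      constructor <;> intro h <;> rw [← h] <;> group
    rw [wordProd_cons, map_mul, Equiv.Perm.mul_apply, ih, signRep_simple]
    simp only [simpleSignPerm, Function.Involutive.coe_toPerm, simpleSignMap, rightInvSeq,
      List.count_cons, beq_iff_eq, hconj, Prod.mk.injEq]
    constructor
    · rw [mul_inv_rev, inv_simple]
      group
    · split_ifs <;> simp [pow_succ]

noncomputable def reflSign (w t : W) : ℤˣ := (cs.signRep w (t, 1)).2

theorem signRep_apply (w t : W) (ε : ℤˣ) :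
    cs.signRep w (t, ε) = (w * t * w⁻¹, cs.reflSign w t * ε) := by
  obtain ⟨ω, rfl⟩ := cs.wordProd_surjective w
  simp [reflSign, signRep_wordProd]

open Classical in
theorem reflSign_wordProd (ω : List B) (t : W) :
    cs.reflSign (π ω) t = (-1) ^ (ris ω).count t := by
  simp [reflSign, signRep_wordProd]

theorem reflSign_mul (x y t : W) :
    cs.reflSign (x * y) t = cs.reflSign x (y * t * y⁻¹) * cs.reflSign y t := by
  have h := congrArg Prod.snd (cs.signRep_apply (x * y) t 1)
  rw [map_mul, Equiv.Perm.mul_apply, signRep_apply, signRep_apply] at h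
  simpa using h.symm

theorem reflSign_one (t : W) : cs.reflSign 1 t = 1 := by
  simp [reflSign]

theorem reflSign_simple_self (i : B) : cs.reflSign (σ i) (σ i) = -1 := by
  simp [reflSign, signRep_simple, simpleSignPerm, simpleSignMap]

theorem reflSign_self {t : W} (ht : cs.IsReflection t) : cs.reflSign t t = -1 := by
  obtain ⟨w, i, rfl⟩ := ht
  have hs : w⁻¹ * (w * σ i * w⁻¹) * w⁻¹⁻¹ = σ i := by group
  have hinv := cs.reflSign_mul w w⁻¹ (w * σ i * w⁻¹)
  rw [mul_inv_cancel, reflSign_one, hs] at hinv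
  calc cs.reflSign (w * σ i * w⁻¹) (w * σ i * w⁻¹)
      = cs.reflSign (w * σ i) (σ i) * cs.reflSign w⁻¹ (w * σ i * w⁻¹) := by
        rw [reflSign_mul, hs]
    _ = -(cs.reflSign w (σ i) * cs.reflSign w⁻¹ (w * σ i * w⁻¹)) := by
        rw [reflSign_mul, show σ i * σ i * (σ i)⁻¹ = σ i by group, reflSign_simple_self,
          mul_neg_one, neg_mul]
    _ = -1 := by rw [← hinv]

theorem isRightInversion_of_reflSign_eq_neg_one {w t : W} (h : cs.reflSign w t = -1) :
    cs.IsRightInversion w t := by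
  classical
  obtain ⟨ω, hω, rfl⟩ := cs.exists_isReduced w
  rw [reflSign_wordProd] at h
  have hodd : Odd ((ris ω).count t) := by
    by_contra heven
    rw [Nat.not_odd_iff_even.mp heven |>.neg_one_pow] at h
    exact absurd h (by decide)
  exact cs.isRightInversion_of_mem_rightInvSeq hω (List.count_pos_iff.mp hodd.pos)

theorem reflSign_eq_neg_one_iff (w t : W) :
    cs.reflSign w t = -1 ↔ cs.IsRightInversion w t := by
  refine ⟨cs.isRightInversion_of_reflSign_eq_neg_one, fun hwt => ?_⟩
  rcases Int.units_eq_one_or (cs.reflSign w t) with h | h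
  · have hwtt : cs.reflSign (w * t) t = -1 := by
      rw [reflSign_mul, show t * t * t⁻¹ = t by group, h, cs.reflSign_self hwt.1, one_mul]
    exact absurd hwt
      (hwt.1.isRightInversion_mul_left_iff.mp (cs.isRightInversion_of_reflSign_eq_neg_one hwtt))
  · exact h

theorem mem_halfSpace_iff_reflSign_inv {t : W} (ht : cs.IsReflection t) (w : W) :
    w ∈ halfSpace cs t ↔ cs.reflSign w⁻¹ t = 1 := by
  rw [← neg_neg (1 : ℤˣ), ← Int.units_ne_iff_eq_neg, Ne, reflSign_eq_neg_one_iff,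
    isRightInversion_inv_iff, IsLeftInversion, halfSpace, Set.mem_ofPred_eq]
  have hne := ht.length_mul_right_ne w
  constructor
  · rintro hlt ⟨-, hgt⟩
    omega
  · intro h
    exact lt_of_le_of_ne (not_lt.mp fun hlt => h ⟨ht, hlt⟩) hne.symm

theorem reflSign_eq_neg_one_of_forall_length_le {w₀ : W} (hw₀ : ∀ w, ℓ w ≤ ℓ w₀) {t : W}
    (ht : cs.IsReflection t) : cs.reflSign w₀ t = -1 :=
  (cs.reflSign_eq_neg_one_iff w₀ t).mpr ⟨ht, lt_of_le_of_ne (hw₀ _) (ht.length_mul_left_ne w₀)⟩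

theorem mul_inv_mem_halfSpace_iff {w₀ : W} (hw₀ : ∀ w, ℓ w ≤ ℓ w₀) {t : W}
    (ht : cs.IsReflection t) (w : W) : w * w₀⁻¹ ∈ halfSpace cs t ↔ w ∉ halfSpace cs t := by
  rw [mem_halfSpace_iff_reflSign_inv cs ht, mem_halfSpace_iff_reflSign_inv cs ht, mul_inv_rev,
    inv_inv, reflSign_mul, cs.reflSign_eq_neg_one_of_forall_length_le hw₀ (ht.conj w⁻¹)]
  rcases Int.units_eq_one_or (cs.reflSign w⁻¹ t) with h | h <;> simp [h]

end CoxeterSystem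

section Roots

variable {M : CoxeterMatrix B} {cs : CoxeterSystem M W}

theorem IsRoot.compl {α : Set W} (hα : IsRoot cs α) : IsRoot cs αᶜ := by
  obtain ⟨t, ht, rfl | rfl⟩ := hα
  · exact ⟨t, ht, Or.inr rfl⟩
  · exact ⟨t, ht, Or.inl (compl_compl _)⟩

variable (cs) in
theorem exists_equiv_preimage_eq_compl_of_isRoot [Finite W] :
    ∃ e : W ≃ W, ∀ α, IsRoot cs α → e ⁻¹' α = αᶜ := by
  obtain ⟨w₀, hw₀⟩ := Finite.exists_max cs.length
  refine ⟨Equiv.mulRight w₀⁻¹, ?_⟩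
  rintro α ⟨t, ht, rfl | rfl⟩ <;> ext w
  · exact cs.mul_inv_mem_halfSpace_iff hw₀ ht w
  · exact (cs.mul_inv_mem_halfSpace_iff hw₀ ht w).not

theorem IsRoot.two_mul_ncard [Finite W] {α : Set W} (hα : IsRoot cs α) :
    2 * α.ncard = Nat.card W := by
  obtain ⟨e, he⟩ := exists_equiv_preimage_eq_compl_of_isRoot cs
  have hcompl : αᶜ.ncard = α.ncard := by
    rw [← he α hα, Set.ncard_preimage_of_injective_subset_range e.injective (by simp)]
  have := Set.ncard_add_ncard_compl α
  omega

theorem IsRoot.compl_inter_compl_subset_compl [Finite W] {α β γ : Set W} (hα : IsRoot cs α)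
    (hβ : IsRoot cs β) (hγ : IsRoot cs γ) (h : α ∩ β ⊆ γ) : αᶜ ∩ βᶜ ⊆ γᶜ := by
  obtain ⟨e, he⟩ := exists_equiv_preimage_eq_compl_of_isRoot cs
  rw [← he α hα, ← he β hβ, ← he γ hγ]
  exact Set.preimage_mono h

end Roots

theorem spherical_prenilpotent_iff {M : CoxeterMatrix B} (cs : CoxeterSystem M W)
    [Finite W] (α β : Set W) (hα : IsRoot cs α) (hβ : IsRoot cs β) :
    (((α ∩ β).Nonempty ∧ (αᶜ ∩ βᶜ).Nonempty) ↔ α ≠ βᶜ) ∧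
      (α ≠ βᶜ → rootInterval cs α β = {γ | IsRoot cs γ ∧ α ∩ β ⊆ γ}) := by
  refine ⟨⟨?_, fun hne => ⟨?_, ?_⟩⟩, fun _ => ?_⟩
  · rintro ⟨⟨w, hwα, hwβ⟩, -⟩ rfl
    exact hwα hwβ
  · exact Set.inter_nonempty_of_two_mul_ncard_eq hα.two_mul_ncard hβ.two_mul_ncard hne
  · exact Set.inter_nonempty_of_two_mul_ncard_eq hα.compl.two_mul_ncard hβ.compl.two_mul_ncard
      (compl_injective.ne hne)
  · ext γ
    exact ⟨fun ⟨hγ, h, _⟩ => ⟨hγ, h⟩,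
      fun ⟨hγ, h⟩ => ⟨hγ, h, hα.compl_inter_compl_subset_compl hβ hγ h⟩⟩
end

section
/- If a group G acts on a set X and H ≤ G is a subgroup containing the stabilizer of a point x_0, and the orbit map induces a bijection between the G-orbit of x_0 and G/H whenever the stabilizer equals H, then: for the Wagoner complex setting where G acts on the components of |W(G)| with the component of the standard apartment having stabilizer exactly G† = ⟨U_s : s ∈ Σ⟩ and the action on components being transitive, the set of connected components of |W(G)| is in G-equivariant bijection with G/G†. -/
theorem components_equiv_coset_space {G : Type*} [Group G] {X : Type*}
    [MulAction G X] (Gdag : Subgroup G) (x₀ : X)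
    -- the action on components is transitive:
    (htrans : ∀ x : X, ∃ g : G, g • x₀ = x)
    -- the stabilizer of the component of the standard apartment is `G†`:
    (hstab : MulAction.stabilizer G x₀ = Gdag) :
    ∃ e : G ⧸ Gdag ≃ X, e ((1 : G) : G ⧸ Gdag) = x₀ ∧
      ∀ (g : G) (y : G ⧸ Gdag), e (g • y) = g • e y := by
  subst hstab
  have hsurj : Function.Surjective (MulAction.ofQuotientStabilizer G x₀) := fun x =>
    let ⟨g, hg⟩ := htrans x; ⟨g, hg⟩
  refine ⟨Equiv.ofBijective _ ⟨MulAction.injective_ofQuotientStabilizer G x₀, hsurj⟩, ?_,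
    MulAction.ofQuotientStabilizer_smul G x₀⟩
  exact (MulAction.ofQuotientStabilizer_mk G x₀ 1).trans (one_smul G x₀)
end
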